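/- Let (A,‖·‖) be a commutative unital complex normed algebra whose norm ‖·‖ is a uniform norm, such that (A,‖·‖) is a Q-algebra and (A,‖·‖) is regular. Then every uniform norm |·| on A coincides with ‖·‖: |x| = ‖x‖ for all x ∈ A. -/

import Mathlib

/-!
A uniform norm `p` is attained by its bounded characters, `p x = max {‖f x‖ | f ∈ M(A, p)}`:
in the completion of `(A, p)` the square property makes the spectral radius equal to the norm,
and the spectrum is the set of values of the characters.

In a Q-algebra every character is `N`-bounded, so `M(A, q) ⊆ M(A, N)`, whence `q ≤ N`.
Conversely `M(A, q)` is weak-* dense in `M(A, N)`: an element vanishing on its closure has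
`q`-norm `0`, so regularity leaves no point of `M(A, N)` outside that closure. Since
`‖f x‖ ≤ q x` is a closed condition on `f`, it holds on all of `M(A, N)`, giving `N ≤ q`.
-/

/-- `x` is quasi-invertible: there is `y` with `x ∘ y = y ∘ x = 0`
where `x ∘ y = x + y - x*y`. -/
def IsQuasiInv {A : Type*} [Ring A] (x : A) : Prop :=
  ∃ y, x + y - x * y = 0 ∧ y + x - y * x = 0

/-- `S` is open in the topology induced by the norm `N`. -/
def NormOpen {A : Type*} [AddGroup A] (N : A → ℝ) (S : Set A) : Prop :=
  ∀ x ∈ S, ∃ ε > 0, ∀ y, N (y - x) < ε → y ∈ S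

/-- A uniform norm: a submultiplicative norm satisfying the square property. -/
structure IsUniformNorm {A : Type*} [Ring A] [Module ℂ A] (N : A → ℝ) : Prop where
  eq_zero_iff : ∀ x, N x = 0 ↔ x = 0
  add_le : ∀ x y, N (x + y) ≤ N x + N y
  smul_eq : ∀ (c : ℂ) (x : A), N (c • x) = ‖c‖ * N x
  mul_le : ∀ x y, N (x * y) ≤ N x * N y
  sq_eq : ∀ x, N (x * x) = N x * N x

/-- `M(A, N)`: the nonzero multiplicative linear functionals on `A` that are
continuous (i.e. bounded) with respect to the norm `N`. -/
def MSpec {A : Type*} [Ring A] [Module ℂ A] (N : A → ℝ) : Set (A → ℂ) :=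
  {f | (∀ x y, f (x + y) = f x + f y) ∧ (∀ (c : ℂ) (x : A), f (c • x) = c * f x) ∧
       (∀ x y, f (x * y) = f x * f y) ∧ f ≠ 0 ∧ (∃ C : ℝ, ∀ x, ‖f x‖ ≤ C * N x)}

/-- `(A, N)` is regular: for every subset `F` of `M(A,N)` that is closed in the
weak-* (pointwise convergence) topology and every `f₁ ∈ M(A,N) \ F` there is
`x ∈ A` vanishing on `F` with `f₁ x ≠ 0`. -/
def RegularWrt {A : Type*} [Ring A] [Module ℂ A] (N : A → ℝ) : Prop :=
  ∀ F : Set (A → ℂ), F ⊆ MSpec N →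
    IsClosed {g : ↥(MSpec N) | (g : A → ℂ) ∈ F} →
    ∀ f₁ ∈ MSpec N, f₁ ∉ F → ∃ x : A, (∀ f ∈ F, f x = 0) ∧ f₁ x ≠ 0

open Filter UniformSpace

namespace IsUniformNorm

variable {A : Type*} [Ring A] [Module ℂ A] {p : A → ℝ}

theorem map_zero (hp : IsUniformNorm p) : p 0 = 0 :=
  (hp.eq_zero_iff 0).2 rfl

theorem map_neg (hp : IsUniformNorm p) (x : A) : p (-x) = p x := by
  simpa using hp.smul_eq (-1) x

theorem nonneg (hp : IsUniformNorm p) (x : A) : 0 ≤ p x := by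
  have h := hp.add_le x (-x)
  rw [add_neg_cancel, hp.map_zero, hp.map_neg] at h
  linarith

theorem map_pow_two_pow (hp : IsUniformNorm p) (x : A) (k : ℕ) : p (x ^ 2 ^ k) = p x ^ 2 ^ k := by
  induction k with
  | zero => simp
  | succ k ih => rw [pow_succ, pow_mul, sq, hp.sq_eq, ih, ← sq, ← pow_mul]

end IsUniformNorm

theorem le_of_frequently_pow_le_mul_pow {a b C : ℝ} (hb : 0 ≤ b)
    (h : ∃ᶠ n in atTop, a ^ n ≤ C * b ^ n) : a ≤ b := by
  by_contra! hba
  suffices ∀ᶠ n in atTop, C * b ^ n < a ^ n from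
    let ⟨_, hle, hlt⟩ := (h.and_eventually this).exists; hle.not_gt hlt
  rcases hb.eq_or_lt with rfl | hb
  · filter_upwards [eventually_ne_atTop 0] with n hn
    simpa [zero_pow hn] using pow_pos hba n
  · have hgrowth := tendsto_pow_atTop_atTop_of_one_lt ((one_lt_div hb).2 hba)
    filter_upwards [hgrowth.eventually_gt_atTop C] with n hn
    rwa [div_pow, lt_div_iff₀ (pow_pos hb n)] at hn

theorem mem_MSpec_iff {A : Type*} [Ring A] [Algebra ℂ A] {p : A → ℝ} {f : A → ℂ} :
    f ∈ MSpec p ↔ ∃ φ : A →ₐ[ℂ] ℂ, ⇑φ = f ∧ ∃ C : ℝ, ∀ x, ‖φ x‖ ≤ C * p x := by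
  constructor
  · rintro ⟨hadd, hsmul, hmul, hne, hC⟩
    obtain ⟨y, hy⟩ := Function.ne_iff.1 hne
    have hone : f 1 = 1 := (mul_eq_right₀ hy).1 (by rw [← hmul, one_mul])
    exact ⟨AlgHom.ofLinearMap ⟨⟨f, hadd⟩, hsmul⟩ hone hmul, rfl, hC⟩
  · rintro ⟨φ, rfl, hC⟩
    refine ⟨map_add φ, map_smul φ, map_mul φ, fun h => ?_, hC⟩
    exact one_ne_zero ((map_one φ).symm.trans (congrFun h 1))

theorem IsUniformNorm.norm_apply_le_of_mem_MSpec {A : Type*} [Ring A] [Algebra ℂ A]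
    {p : A → ℝ} (hp : IsUniformNorm p) {f : A → ℂ} (hf : f ∈ MSpec p) (x : A) :
    ‖f x‖ ≤ p x := by
  obtain ⟨φ, rfl, C, hC⟩ := mem_MSpec_iff.1 hf
  refine le_of_frequently_pow_le_mul_pow (hp.nonneg x) (C := C)
    (frequently_atTop.2 fun k => ⟨2 ^ k, k.lt_two_pow_self.le, ?_⟩)
  calc ‖φ x‖ ^ 2 ^ k = ‖φ (x ^ 2 ^ k)‖ := by rw [map_pow, norm_pow]
    _ ≤ C * p (x ^ 2 ^ k) := hC _
    _ = C * p x ^ 2 ^ k := by rw [hp.map_pow_two_pow]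

theorem IsQuasiInv.map_ne_one {A B F : Type*} [Ring A] [Ring B] [Nontrivial B] [FunLike F A B]
    [RingHomClass F A B] {x : A} (hx : IsQuasiInv x) (φ : F) : φ x ≠ 1 := by
  obtain ⟨y, hxy, -⟩ := hx
  intro h
  simpa [h] using congrArg φ hxy

section QAlgebra

variable {A : Type*} [Ring A] [Algebra ℂ A] {N : A → ℝ}

/-- `φ` never takes the value `1` on the `N`-ball of quasi-invertible elements around `0`;
rescaling `x` by `(φ x)⁻¹` turns this into a bound. -/
theorem AlgHom.exists_bound_of_normOpen_isQuasiInv (hN : IsUniformNorm N)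
    (hQ : NormOpen N {x | IsQuasiInv x}) (φ : A →ₐ[ℂ] ℂ) :
    ∃ C : ℝ, ∀ x, ‖φ x‖ ≤ C * N x := by
  obtain ⟨ε, hε, hball⟩ := hQ 0 ⟨0, by simp, by simp⟩
  refine ⟨ε⁻¹, fun x => ?_⟩
  by_contra! hlt
  have hφx : 0 < ‖φ x‖ := (mul_nonneg (inv_nonneg.2 hε.le) (hN.nonneg x)).trans_lt hlt
  have hquasi : IsQuasiInv ((φ x)⁻¹ • x) := hball _ <| by
    rw [sub_zero, hN.smul_eq, norm_inv, inv_mul_lt_iff₀ hφx]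
    rwa [inv_mul_lt_iff₀ hε, mul_comm] at hlt
  exact hquasi.map_ne_one φ (by simp [norm_pos_iff.1 hφx])

theorem MSpec_subset_of_normOpen_isQuasiInv (hN : IsUniformNorm N)
    (hQ : NormOpen N {x | IsQuasiInv x}) (q : A → ℝ) : MSpec q ⊆ MSpec N := fun f hf => by
  obtain ⟨φ, rfl, -⟩ := mem_MSpec_iff.1 hf
  exact mem_MSpec_iff.2 ⟨φ, rfl, φ.exists_bound_of_normOpen_isQuasiInv hN hQ⟩

end QAlgebra

theorem RegularWrt.MSpec_subset_closure {A : Type*} [Ring A] [Module ℂ A] {N : A → ℝ}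
    (hreg : RegularWrt N) {S : Set (A → ℂ)} (hS : S ⊆ MSpec N)
    (hsep : ∀ y, (∀ f ∈ S, f y = 0) → y = 0) : MSpec N ⊆ closure S := by
  intro f₁ hf₁
  by_contra hf₁S
  have hclosed : IsClosed {g : MSpec N | (g : A → ℂ) ∈ MSpec N ∩ closure S} := by
    simpa [Set.preimage] using isClosed_closure.preimage continuous_subtype_val
  obtain ⟨y, hyF, hy⟩ := hreg _ Set.inter_subset_left hclosed f₁ hf₁ fun h => hf₁S h.2
  rw [hsep y fun f hf => hyF f ⟨hS hf, subset_closure hf⟩] at hy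
  exact hy (by simpa using hf₁.1 0 0)

/-- Gelfand's formula along the subsequence `2 ^ k`. -/
theorem spectralRadius_eq_nnnorm_of_norm_pow_two_pow {B : Type*} [NormedRing B]
    [NormedAlgebra ℂ B] [CompleteSpace B] {a : B}
    (ha : ∀ k : ℕ, ‖a ^ 2 ^ k‖ = ‖a‖ ^ 2 ^ k) : spectralRadius ℂ a = ‖a‖₊ := by
  have hconst : Tendsto (fun _ : ℕ => (‖a‖₊ : ENNReal)) atTop _ := tendsto_const_nhds
  refine tendsto_nhds_unique ?_ hconst
  convert (spectrum.pow_nnnorm_pow_one_div_tendsto_nhds_spectralRadius a).comp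
    (tendsto_pow_atTop_atTop_of_one_lt one_lt_two) using 1
  refine funext fun k => ?_
  have hk : ‖a ^ 2 ^ k‖₊ = ‖a‖₊ ^ 2 ^ k := NNReal.eq (by simpa using ha k)
  rw [Function.comp_apply, hk, ENNReal.coe_pow, ← ENNReal.rpow_natCast, ← ENNReal.rpow_mul]
  simp

theorem exists_algHom_norm_apply_eq_of_norm_pow_two_pow {B : Type*} [NormedCommRing B]
    [NormedAlgebra ℂ B] [CompleteSpace B] [Nontrivial B] {a : B}
    (ha : ∀ k : ℕ, ‖a ^ 2 ^ k‖ = ‖a‖ ^ 2 ^ k) : ∃ φ : B →ₐ[ℂ] ℂ, ‖φ a‖ = ‖a‖ := by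
  obtain ⟨z, hz, hzn⟩ := spectrum.exists_nnnorm_eq_spectralRadius a
  rw [spectralRadius_eq_nnnorm_of_norm_pow_two_pow ha, ENNReal.coe_inj] at hzn
  obtain ⟨φ, rfl⟩ := WeakDual.CharacterSpace.mem_spectrum_iff_exists.1 hz
  exact ⟨WeakDual.CharacterSpace.toAlgHom φ, congrArg NNReal.toReal hzn⟩

theorem IsUniformNorm.exists_mem_MSpec_norm_apply_eq {A : Type*} [CommRing A] [Algebra ℂ A]
    [Nontrivial A] {p : A → ℝ} (hp : IsUniformNorm p) (x : A) :
    ∃ f ∈ MSpec p, ‖f x‖ = p x := by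
  let _ : NormedAddCommGroup A := AddGroupNorm.toNormedAddCommGroup
    { toFun := p
      map_zero' := hp.map_zero
      add_le' := hp.add_le
      neg' := hp.map_neg
      eq_zero_of_map_eq_zero' := fun y => (hp.eq_zero_iff y).1 }
  let _ : NormedCommRing A :=
    { ‹NormedAddCommGroup A›, ‹CommRing A› with norm_mul_le := hp.mul_le }
  let _ : NormedAlgebra ℂ A := { norm_smul_le := fun c y => (hp.smul_eq c y).le }
  let ι : A →ₐ[ℂ] Completion A := { Completion.coeRingHom with commutes' := fun _ => rfl }
  have hι (y : A) : ‖ι y‖ = p y := Completion.norm_coe y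
  have : Nontrivial (Completion A) := (Completion.coe_injective A).nontrivial
  obtain ⟨φ, hφ⟩ := exists_algHom_norm_apply_eq_of_norm_pow_two_pow (a := ι x) fun k => by
    rw [← map_pow, hι, hι, hp.map_pow_two_pow]
  refine ⟨φ.comp ι, mem_MSpec_iff.2 ⟨_, rfl, ‖(1 : Completion A)‖, fun y => ?_⟩, ?_⟩
  · simpa [hι, mul_comm] using AlgHom.norm_apply_le_self_mul_norm_one φ (ι y)
  · rw [AlgHom.comp_apply, hφ, hι]

/-- The uniform norm on a regular uniform normed Q-algebra with unit is the only
uniform norm on it. -/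
theorem uniform_norm_unique_of_regular {A : Type*} [CommRing A] [Algebra ℂ A]
    (N : A → ℝ) (hN : IsUniformNorm N)
    (hQ : NormOpen N {x | IsQuasiInv x})
    (hreg : RegularWrt N)
    (q : A → ℝ) (hq : IsUniformNorm q) :
    ∀ x, q x = N x := by
  intro x
  rcases subsingleton_or_nontrivial A with _ | _
  · rw [Subsingleton.elim x 0, hq.map_zero, hN.map_zero]
  have hsub : MSpec q ⊆ MSpec N := MSpec_subset_of_normOpen_isQuasiInv hN hQ q
  have hdense : MSpec N ⊆ closure (MSpec q) := hreg.MSpec_subset_closure hsub fun y hy => by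
    obtain ⟨f, hf, hfy⟩ := hq.exists_mem_MSpec_norm_apply_eq y
    rw [← hq.eq_zero_iff, ← hfy, hy f hf, norm_zero]
  apply le_antisymm
  · obtain ⟨f, hf, hfx⟩ := hq.exists_mem_MSpec_norm_apply_eq x
    exact hfx ▸ hN.norm_apply_le_of_mem_MSpec (hsub hf) x
  · obtain ⟨f, hf, hfx⟩ := hN.exists_mem_MSpec_norm_apply_eq x
    have hclosed : IsClosed {g : A → ℂ | ‖g x‖ ≤ q x} :=
      isClosed_le (continuous_apply x).norm continuous_const
    exact hfx ▸ closure_minimal (fun g hg => hq.norm_apply_le_of_mem_MSpec hg x) hclosed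
      (hdense hf)
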